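/- arXiv:2003.10660 — 3 statements merged into one kernel-verified Lean document; each statement's English description precedes it below -/
import Mathlib

section
/- Let {T_n} be the tribonacci numbers. For every integer n ≥ 2, the Toeplitz–Hessenberg determinant det(−1; T_1, T_2, …, T_n) equals Σ_{i=0}^{⌊(2n−4)/3⌋} C(2n−4−2i, i). -/
/-- The determinant of the `n × n` Toeplitz–Hessenberg matrix whose `(i,j)` entry
(0-indexed) is `a (i - j + 1)` when `j ≤ i + 1` (so `a 0` lies on the superdiagonal
and `a k` on the `k`-th subdiagonal) and `0` otherwise. -/
def THdet (a : ℕ → ℤ) (n : ℕ) : ℤ :=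
  (Matrix.of fun i j : Fin n => if (j : ℕ) ≤ (i : ℕ) + 1 then a ((i : ℕ) + 1 - (j : ℕ)) else 0).det

/-- The tribonacci numbers: `T 0 = T 1 = 0`, `T 2 = 1`,
`T n = T (n-1) + T (n-2) + T (n-3)` for `n ≥ 3`. -/
def trib : ℕ → ℤ
  | 0 => 0
  | 1 => 0
  | 2 => 1
  | n + 3 => trib (n + 2) + trib (n + 1) + trib n

open Finset Matrix

lemma val_succAbove {n : ℕ} (i : Fin (n+1)) (r : Fin n) :
    ((i.succAbove r : Fin (n+1)) : ℕ) = if (r:ℕ) < (i:ℕ) then (r:ℕ) else (r:ℕ)+1 := by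
  rcases lt_or_ge ((r:ℕ)) ((i:ℕ)) with h | h
  · rw [Fin.succAbove_of_castSucc_lt _ _ (by simpa [Fin.lt_def] using h), if_pos h,
      Fin.coe_castSucc]
  · rw [Fin.succAbove_of_le_castSucc _ _ (by simpa [Fin.le_def] using h),
      if_neg (not_lt.2 h), Fin.val_succ]

lemma submatrix_det (a : ℕ → ℤ) (ha : a 0 = -1) (n : ℕ) (i : Fin (n+1)) :
    ((Matrix.of fun r c : Fin (n+1) => if (c:ℕ) ≤ (r:ℕ)+1 then a ((r:ℕ)+1-(c:ℕ)) else 0).submatrix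
      i.succAbove Fin.succ).det = (-1)^(i:ℕ) * THdet a (n - (i:ℕ)) := by
  set k := (i : ℕ) with hk
  have hkn : k ≤ n := by omega
  have hsum : k + (n - k) = n := by omega
  set M := (Matrix.of fun r c : Fin (n+1) =>
    if (c:ℕ) ≤ (r:ℕ)+1 then a ((r:ℕ)+1-(c:ℕ)) else 0) with hM
  set N := M.submatrix i.succAbove Fin.succ with hN
  let e : Fin k ⊕ Fin (n-k) ≃ Fin n := finSumFinEquiv.trans (finCongr hsum)
  have hel : ∀ x : Fin k, ((e (Sum.inl x) : Fin n) : ℕ) = (x : ℕ) := fun x => rfl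
  have her : ∀ x : Fin (n-k), ((e (Sum.inr x) : Fin n) : ℕ) = k + (x : ℕ) := fun x => rfl
  have hsl : ∀ x : Fin k, ((i.succAbove (e (Sum.inl x)) : Fin (n+1)) : ℕ) = (x : ℕ) := by
    intro x; rw [val_succAbove, hel, if_pos (show (x:ℕ) < (i:ℕ) by have := x.isLt; omega)]
  have hsr : ∀ x : Fin (n-k), ((i.succAbove (e (Sum.inr x)) : Fin (n+1)) : ℕ) = k + (x:ℕ) + 1 := by
    intro x; rw [val_succAbove, her, if_neg (by omega)]
  have hdet : N.det = (N.submatrix e e).det := (Matrix.det_submatrix_equiv_self e N).symm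
  have hblock : N.submatrix e e = Matrix.fromBlocks
      (Matrix.of fun x y : Fin k => if (y:ℕ) ≤ (x:ℕ) then a ((x:ℕ)-(y:ℕ)) else 0) 0
      (Matrix.of fun (x : Fin (n-k)) (y : Fin k) =>
        if (y:ℕ)+1 ≤ k + (x:ℕ) + 2 then a (k + (x:ℕ)+2-((y:ℕ)+1)) else 0)
      (Matrix.of fun x y : Fin (n-k) => if (y:ℕ) ≤ (x:ℕ)+1 then a ((x:ℕ)+1-(y:ℕ)) else 0) := by
    ext u v
    rcases u with x | x <;> rcases v with y | y <;>
      simp only [hN, hM, Matrix.submatrix_apply, Matrix.fromBlocks_apply₁₁, Matrix.fromBlocks_apply₁₂,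
        Matrix.fromBlocks_apply₂₁, Matrix.fromBlocks_apply₂₂, Matrix.of_apply, Fin.val_succ,
        hsl, hsr, hel, her, Matrix.zero_apply] <;>
      first
        | rfl
        | rw [if_neg (by omega)]
        | (split_ifs <;> first | (congr 1; omega) | omega)
  rw [hdet, hblock, Matrix.det_fromBlocks_zero₁₂]
  have hA : (Matrix.of fun x y : Fin k => if (y:ℕ) ≤ (x:ℕ) then a ((x:ℕ)-(y:ℕ)) else 0).det
      = (-1)^k := by
    rw [Matrix.det_of_lowerTriangular _ (fun x y hxy => by
      rw [Matrix.of_apply, if_neg]; exact not_le.2 hxy)]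
    simp [ha]
  rw [hA]; rfl

lemma THdet_succ (a : ℕ → ℤ) (ha : a 0 = -1) (n : ℕ) :
    THdet a (n+1) = ∑ k ∈ Finset.range (n+1), a (k+1) * THdet a (n-k) := by
  rw [← Fin.sum_univ_eq_sum_range (fun k => a (k+1) * THdet a (n-k)) (n+1)]
  rw [THdet, Matrix.det_succ_column_zero]
  refine Finset.sum_congr rfl fun i _ => ?_
  rw [submatrix_det a ha n i]
  have h0 : (Matrix.of fun r c : Fin (n+1) =>
      if (c:ℕ) ≤ (r:ℕ)+1 then a ((r:ℕ)+1-(c:ℕ)) else 0) i 0 = a ((i:ℕ)+1) := by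
    simp
  rw [h0]
  have : ((-1:ℤ)^(i:ℕ))*((-1:ℤ)^(i:ℕ)) = 1 := by
    rw [← pow_add]; exact Even.neg_one_pow ⟨(i:ℕ), rfl⟩
  calc (-1:ℤ)^(i:ℕ) * a ((i:ℕ)+1) * ((-1)^(i:ℕ) * THdet a (n - (i:ℕ)))
      = ((-1:ℤ)^(i:ℕ)*(-1)^(i:ℕ)) * (a ((i:ℕ)+1) * THdet a (n-(i:ℕ))) := by ring
    _ = a ((i:ℕ)+1) * THdet a (n-(i:ℕ)) := by rw [this, one_mul]

lemma THdet_zero (a : ℕ → ℤ) : THdet a 0 = 1 := Matrix.det_fin_zero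

noncomputable def D (n : ℕ) : ℤ := THdet (fun k => if k = 0 then -1 else trib k) n

lemma D_conv (n : ℕ) : D (n+1) = ∑ k ∈ Finset.range (n+1), trib (k+1) * D (n-k) := by
  rw [D, THdet_succ _ (by norm_num)]
  exact Finset.sum_congr rfl fun k _ => by norm_num [D]

lemma D0 : D 0 = 1 := THdet_zero _
lemma D1 : D 1 = 0 := by rw [D_conv]; simp [trib]
lemma D2 : D 2 = 1 := by
  rw [D_conv]; simp [Finset.sum_range_succ, trib, D0, D1]
lemma D3 : D 3 = 1 := by
  rw [D_conv]; simp [Finset.sum_range_succ, trib, D0, D1, D2]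
lemma D4 : D 4 = 3 := by
  rw [D_conv]; norm_num [Finset.sum_range_succ, trib, D0, D1, D2, D3]

lemma D_rec (m : ℕ) : D (m+4) = D (m+3) + 2 * D (m+2) + D (m+1) := by
  have e4 : D (m+4) = (∑ i ∈ Finset.range (m+1), trib (i+4) * D (m-i))
      + D (m+1) + D (m+2) := by
    rw [show m+4 = (m+3)+1 by ring, D_conv, Finset.sum_range_succ']
    rw [Finset.sum_range_succ', Finset.sum_range_succ']
    have h1 : ∀ i, trib (i+1+1+1+1) = trib (i+4) := fun i => by norm_num
    have h2 : ∀ i : ℕ, m+3-(i+1+1+1) = m-i := fun i => by omega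
    simp only [h1, h2]
    have : trib 1 = 0 := rfl
    have t2 : trib 2 = 1 := rfl
    have t3 : trib 3 = 1 := by simp [trib]
    simp only [Nat.add_sub_cancel, Nat.zero_add, this, t2, t3]
    have a1 : m+3-(1+1) = m+1 := by omega
    have a2 : m+3-1 = m+2 := by omega
    rw [a1, a2]; ring
  have e3 : D (m+3) = (∑ i ∈ Finset.range (m+1), trib (i+3) * D (m-i)) + D (m+1) := by
    rw [show m+3 = (m+2)+1 by ring, D_conv, Finset.sum_range_succ', Finset.sum_range_succ']
    have h1 : ∀ i : ℕ, trib (i+1+1+1) = trib (i+3) := fun i => by norm_num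
    have h2 : ∀ i : ℕ, m+2-(i+1+1) = m-i := fun i => by omega
    have t1 : trib 1 = 0 := rfl
    have t2 : trib 2 = 1 := rfl
    have a1 : m+2-(0+1) = m+1 := by omega
    simp only [h1, h2, t1, t2, a1]
    ring
  have e2 : D (m+2) = ∑ i ∈ Finset.range (m+1), trib (i+2) * D (m-i) := by
    rw [show m+2 = (m+1)+1 by ring, D_conv, Finset.sum_range_succ']
    have h1 : ∀ i : ℕ, trib (i+1+1) = trib (i+2) := fun i => by norm_num
    have h2 : ∀ i : ℕ, m+1-(i+1) = m-i := fun i => by omega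
    have t1 : trib 1 = 0 := rfl
    simp only [h1, h2, t1]
    ring
  have e1 : D (m+1) = ∑ i ∈ Finset.range (m+1), trib (i+1) * D (m-i) := D_conv m
  have trib_rec : ∀ n, trib (n+3) = trib (n+2) + trib (n+1) + trib n := fun n => rfl
  have esum : ∑ i ∈ Finset.range (m+1), trib (i+4) * D (m-i)
      = (∑ i ∈ Finset.range (m+1), trib (i+3) * D (m-i))
        + (∑ i ∈ Finset.range (m+1), trib (i+2) * D (m-i))
        + (∑ i ∈ Finset.range (m+1), trib (i+1) * D (m-i)) := by
    rw [← Finset.sum_add_distrib, ← Finset.sum_add_distrib]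
    refine Finset.sum_congr rfl fun i _ => ?_
    have : trib (i+4) = trib (i+3) + trib (i+2) + trib (i+1) := by
      have := trib_rec (i+1)
      have h1 : i+1+3 = i+4 := by ring
      have h2 : i+1+2 = i+3 := by ring
      have h3 : i+1+1 = i+2 := by ring
      rw [h1, h2, h3] at this
      exact this
    rw [this]; ring
  linarith [e4, e3, e2, e1, esum]

noncomputable def F (m : ℕ) : ℤ := ∑ i ∈ Finset.range (m+1), ((m - 2*i).choose i : ℤ)

lemma pascal_step (m i : ℕ) :
    (m+1-2*i).choose (i+1) = (m-2*i).choose (i+1) + (m-2*i).choose i := by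
  rcases le_or_gt (2*i) m with h | h
  · rw [show m+1-2*i = (m-2*i)+1 by omega, Nat.choose_succ_succ]
    exact Nat.add_comm _ _
  · have hi : 1 ≤ i := by omega
    rw [show m+1-2*i = 0 by omega, show m-2*i = 0 by omega,
      Nat.choose_eq_zero_of_lt (show (0:ℕ) < i+1 by omega),
      Nat.choose_eq_zero_of_lt (show (0:ℕ) < i by omega)]

lemma F_rec (m : ℕ) : F (m+3) = F (m+2) + F m := by
  have hsplit : ∑ i ∈ Finset.range (m+3), ((m+1-2*i).choose (i+1) : ℤ)
      = (∑ i ∈ Finset.range (m+3), ((m-2*i).choose (i+1) : ℤ))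
        + ∑ i ∈ Finset.range (m+3), ((m-2*i).choose i : ℤ) := by
    rw [← Finset.sum_add_distrib]
    refine Finset.sum_congr rfl fun i _ => ?_
    exact_mod_cast congrArg (Nat.cast (R := ℤ)) (pascal_step m i)
  have e3 : F (m+3) = 1 + ∑ i ∈ Finset.range (m+3), ((m+1-2*i).choose (i+1) : ℤ) := by
    rw [F, Finset.sum_range_succ']
    have h : ∀ i : ℕ, m+3-2*(i+1) = m+1-2*i := fun i => by omega
    simp only [h]
    norm_num [add_comm]
  have hext : ∑ i ∈ Finset.range (m+3), ((m-2*i).choose (i+1) : ℤ)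
      = ∑ i ∈ Finset.range (m+2), ((m-2*i).choose (i+1) : ℤ) := by
    rw [Finset.sum_range_succ, show m-2*(m+2) = 0 by omega,
      Nat.choose_eq_zero_of_lt (show 0 < m+2+1 by omega)]
    norm_num
  have e2 : F (m+2) = 1 + ∑ i ∈ Finset.range (m+3), ((m-2*i).choose (i+1) : ℤ) := by
    rw [F, Finset.sum_range_succ', hext]
    have h : ∀ i : ℕ, m+2-2*(i+1) = m-2*i := fun i => by omega
    simp only [h]
    norm_num [add_comm]
  have e0 : F m = ∑ i ∈ Finset.range (m+3), ((m-2*i).choose i : ℤ) := by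
    rw [F]
    refine (Finset.sum_subset (f := fun i => ((m-2*i).choose i : ℤ))
      (Finset.range_subset_range.2 (show m+1 ≤ m+3 by omega)) fun i _ hi => ?_)
    simp only [Finset.mem_range, not_lt] at hi
    show ((m-2*i).choose i : ℤ) = 0
    rw [show m-2*i = 0 by omega, Nat.choose_eq_zero_of_lt (show 0 < i by omega)]
    norm_num
  linarith [hsplit, e3, e2, e0]

lemma F_trunc (m : ℕ) :
    ∑ i ∈ Finset.range (m/3+1), ((m - 2*i).choose i : ℤ) = F m := by
  rw [F]
  refine Finset.sum_subset (Finset.range_subset_range.2 (show m/3+1 ≤ m+1 by omega)) fun i _ hi => ?_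
  simp only [Finset.mem_range, not_lt] at hi
  rw [Nat.choose_eq_zero_of_lt (show m-2*i < i by omega)]
  norm_num

lemma F0 : F 0 = 1 := by norm_num [F]
lemma F2 : F 2 = 1 := by norm_num [F, Finset.sum_range_succ]
lemma F4 : F 4 = 3 := by norm_num [F, Finset.sum_range_succ]

lemma main_triple (k : ℕ) :
    D (k+2) = F (2*k) ∧ D (k+3) = F (2*k+2) ∧ D (k+4) = F (2*k+4) := by
  induction k with
  | zero =>
    refine ⟨D2.trans F0.symm, D3.trans F2.symm, D4.trans F4.symm⟩
  | succ k ih =>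
    obtain ⟨h0, h1, h2⟩ := ih
    refine ⟨?_, ?_, ?_⟩
    · rw [show k+1+2 = k+3 by ring, show 2*(k+1) = 2*k+2 by ring]; exact h1
    · rw [show k+1+3 = k+4 by ring, show 2*(k+1)+2 = 2*k+4 by ring]; exact h2
    · rw [show k+1+4 = (k+1)+4 from rfl, show 2*(k+1)+4 = 2*k+6 by ring]
      rw [D_rec (k+1)]
      have f1 := F_rec (2*k+3)
      have f2 := F_rec (2*k+2)
      have f3 := F_rec (2*k)
      rw [show k+1+3 = k+4 by ring, show k+1+2 = k+3 by ring, h2, h1, h0]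
      have g1 : F (2*k+3+3) = F (2*k+6) := by norm_num
      have g2 : F (2*k+3+2) = F (2*k+5) := by norm_num
      have g3 : F (2*k+2+3) = F (2*k+5) := by norm_num
      have g4 : F (2*k+2+2) = F (2*k+4) := by norm_num
      have g5 : F (2*k+3) = F (2*k+3) := rfl
      rw [g1, g2] at f1
      rw [g3, g4] at f2
      linarith [f1, f2, f3]

theorem stmt_5 (n : ℕ) (hn : 2 ≤ n) :
    THdet (fun k => if k = 0 then -1 else trib k) n =
      ∑ i ∈ Finset.range ((2 * n - 4) / 3 + 1), ((2 * n - 4 - 2 * i).choose i : ℤ) := by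
  obtain ⟨k, rfl⟩ : ∃ k, n = k+2 := ⟨n-2, by omega⟩
  rw [show 2*(k+2)-4 = 2*k by omega]
  rw [F_trunc (2*k)]
  exact (main_triple k).1
end

section
/- Let {T_n} be the tribonacci numbers. For every integer n ≥ 1, the Toeplitz–Hessenberg determinant det(1; T_3, T_5, T_7, …, T_{2n+1}) equals (−2)^{n−1} · Σ_{i=0}^{n−1} 2^{−i−⌊i/2⌋} · C(n−1−i, ⌊i/2⌋), where the identity is an equality of rational numbers. -/
def aseq (k : ℕ) : ℤ := if k = 0 then 1 else trib (2 * k + 1)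

def Hmat (s n : ℕ) : Matrix (Fin n) (Fin n) ℤ :=
  Matrix.of fun p q => if (q : ℕ) = 0 then aseq ((p : ℕ) + 1 + s)
    else if (q : ℕ) ≤ (p : ℕ) + 1 then aseq ((p : ℕ) + 1 - (q : ℕ)) else 0

def Hdet (s n : ℕ) : ℤ := (Hmat s n).det

lemma hdet_one (s : ℕ) : Hdet s 1 = aseq (s + 1) := by
  rw [Hdet, Matrix.det_fin_one]
  have : Hmat s 1 0 0 = aseq (0 + 1 + s) := rfl
  rw [this, show 0 + 1 + s = s + 1 by omega]

lemma sub0 (s n : ℕ) :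
    (Hmat s (n+2)).submatrix Fin.succ ((0 : Fin (n+2)).succAbove) = Hmat 0 (n+1) := by
  ext p q
  simp only [Matrix.submatrix_apply, Fin.succAbove_zero, Hmat, Matrix.of_apply, Fin.val_succ]
  have h1 : (q:ℕ) + 1 ≠ 0 := Nat.succ_ne_zero _
  rw [if_neg h1]
  by_cases h : (q:ℕ) = 0
  · rw [if_pos (by omega : (q:ℕ)+1 ≤ (p:ℕ)+1+1), if_pos h]
    congr 1
    omega
  · rw [if_neg h]
    by_cases h2 : (q:ℕ) ≤ (p:ℕ)+1
    · rw [if_pos (by omega : (q:ℕ)+1 ≤ (p:ℕ)+1+1), if_pos h2]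
      congr 1
      omega
    · rw [if_neg (by omega), if_neg h2]

lemma succAbove_one_val (n : ℕ) (q : Fin (n+1)) :
    (((1 : Fin (n+2)).succAbove q) : ℕ) = if (q : ℕ) = 0 then 0 else (q : ℕ) + 1 := by
  rcases Nat.eq_zero_or_pos (q:ℕ) with h | h
  · rw [if_pos h]
    have hlt : q.castSucc < 1 := by
      rw [Fin.lt_def]
      simp [h, Fin.val_one]
    rw [Fin.succAbove, if_pos hlt]
    simp [h]
  · rw [if_neg h.ne']
    have hlt : ¬ q.castSucc < 1 := by
      rw [Fin.lt_def]
      simp only [Fin.coe_castSucc, Fin.val_one]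
      omega
    rw [Fin.succAbove, if_neg hlt]
    simp

lemma sub1 (s n : ℕ) :
    (Hmat s (n+2)).submatrix Fin.succ ((1 : Fin (n+2)).succAbove) = Hmat (s+1) (n+1) := by
  ext p q
  simp only [Matrix.submatrix_apply, Hmat, Matrix.of_apply, Fin.val_succ, succAbove_one_val]
  by_cases h : (q : ℕ) = 0
  · have e : (p:ℕ) + 1 + 1 + s = (p:ℕ) + 1 + (s + 1) := by omega
    simp [h, e]
  · rw [if_neg h, if_neg h, if_neg (by omega : ¬ ((q:ℕ)+1 = 0))]
    by_cases h2 : (q:ℕ) ≤ (p:ℕ)+1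
    · rw [if_pos (by omega : (q:ℕ)+1 ≤ (p:ℕ)+1+1), if_pos h2]
      congr 1
      omega
    · rw [if_neg (by omega), if_neg h2]

lemma hdet_succ (s n : ℕ) :
    Hdet s (n + 2) = aseq (s + 1) * Hdet 0 (n + 1) - Hdet (s + 1) (n + 1) := by
  have h := Matrix.det_succ_row_zero (Hmat s (n + 2))
  rw [Fin.sum_univ_succ, Fin.sum_univ_succ] at h
  have e1 : Fin.succ (0 : Fin (n+1)) = (1 : Fin (n+2)) := by
    ext
    simp [Fin.val_one]
  rw [e1] at h
  have hz : ∀ j : Fin n, Hmat s (n+2) 0 j.succ.succ = 0 := by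
    intro j
    have hv : ((j.succ.succ : Fin (n+2)) : ℕ) = (j:ℕ) + 2 := by simp
    simp only [Hmat, Matrix.of_apply, hv, Fin.val_zero]
    rw [if_neg (by omega), if_neg (by omega)]
  rw [Fintype.sum_eq_zero _ (by intro j; rw [hz j]; ring)] at h
  have h00 : Hmat s (n+2) 0 0 = aseq (s + 1) := by
    have e : 0 + 1 + s = s + 1 := by omega
    simp [Hmat, e]
  have h01 : Hmat s (n+2) 0 1 = 1 := by
    simp [Hmat, Fin.val_one, aseq]
  rw [sub0, sub1, h00, h01] at h
  simp only [Hdet]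
  rw [h]
  simp only [Fin.val_zero, Fin.val_one, pow_zero, pow_one]
  ring

lemma trib_add3 (n : ℕ) : trib (n + 3) = trib (n + 2) + trib (n + 1) + trib n := rfl

lemma trib_rec6 (m : ℕ) : trib (m + 6) = 3 * trib (m + 4) + trib (m + 2) + trib m := by
  have h0 := trib_add3 m
  have h1 := trib_add3 (m + 1)
  have h2 := trib_add3 (m + 2)
  have h3 := trib_add3 (m + 3)
  simp only [show m+1+3 = m+4 from by omega, show m+1+2 = m+3 from by omega,
    show m+1+1 = m+2 from by omega, show m+2+3 = m+5 from by omega,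
    show m+2+2 = m+4 from by omega, show m+2+1 = m+3 from by omega,
    show m+3+3 = m+6 from by omega, show m+3+2 = m+5 from by omega,
    show m+3+1 = m+4 from by omega] at h0 h1 h2 h3
  linarith

lemma aseq_one : aseq 1 = 1 := by norm_num [aseq, trib]
lemma aseq_two : aseq 2 = 4 := by norm_num [aseq]; rfl
lemma aseq_three : aseq 3 = 13 := by norm_num [aseq]; rfl

lemma aseq_rec (k : ℕ) : aseq (k + 4) = 3 * aseq (k + 3) + aseq (k + 2) + aseq (k + 1) := by
  simp only [aseq, if_neg (by omega : ¬ (k+4 = 0)), if_neg (by omega : ¬ (k+3 = 0)),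
    if_neg (by omega : ¬ (k+2 = 0)), if_neg (by omega : ¬ (k+1 = 0))]
  have h := trib_rec6 (2*k + 3)
  simp only [show 2*k+3+6 = 2*(k+4)+1 from by omega, show 2*k+3+4 = 2*(k+3)+1 from by omega,
    show 2*k+3+2 = 2*(k+2)+1 from by omega] at h
  simp only [show 2*k+3 = 2*(k+1)+1 from by omega] at h
  linarith

lemma hdet_shift : ∀ n, ∀ s : ℕ,
    Hdet (s+3) (n+1) = 3 * Hdet (s+2) (n+1) + Hdet (s+1) (n+1) + Hdet s (n+1) := by
  intro n
  induction n with
  | zero =>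
    intro s
    simp only [Nat.zero_add, hdet_one]
    have h := aseq_rec s
    simp only [show s+3+1 = s+4 from by omega, show s+2+1 = s+3 from by omega,
      show s+1+1 = s+2 from by omega]
    linarith
  | succ n ih =>
    intro s
    have h3 := hdet_succ (s+3) n
    have h2 := hdet_succ (s+2) n
    have h1 := hdet_succ (s+1) n
    have h0 := hdet_succ s n
    have ha := aseq_rec s
    have hi := ih (s+1)
    simp only [show s+3+1 = s+4 from by omega, show s+2+1 = s+3 from by omega,
      show s+1+1 = s+2 from by omega, show s+1+3 = s+4 from by omega,
      show s+1+2 = s+3 from by omega, show n+1+1 = n+2 from by omega] at h3 h2 h1 h0 ha hi ⊢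
    linear_combination h3 - 3*h2 - h1 - h0 + (Hdet 0 (n+1)) * ha - hi

lemma hdet_main_rec (t : ℕ) :
    Hdet 0 (t+4) = -2 * Hdet 0 (t+3) - Hdet 0 (t+1) := by
  have A1 := hdet_succ 0 (t+2)
  have A2 := hdet_succ 1 (t+1)
  have A3 := hdet_succ 2 t
  have B := hdet_shift t 0
  have C1 := hdet_succ 0 t
  have C2 := hdet_succ 1 t
  have C3 := hdet_succ 0 (t+1)
  have e1 := aseq_one
  have e2 := aseq_two
  have e3 := aseq_three
  simp only [show t+2+2 = t+4 from by omega, show t+2+1 = t+3 from by omega,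
    show t+1+2 = t+3 from by omega, show t+1+1 = t+2 from by omega,
    show (0:ℕ)+1 = 1 from rfl, show (1:ℕ)+1 = 2 from rfl, show (2:ℕ)+1 = 3 from rfl,
    show (0:ℕ)+3 = 3 from rfl, show (0:ℕ)+2 = 2 from rfl] at A1 A2 A3 B C1 C2 C3
  rw [e1] at A1 C1 C3
  rw [e2] at A2 C2
  rw [e3] at A3
  linarith

lemma hdet_base1 : Hdet 0 1 = 1 := by rw [hdet_one, aseq_one]
lemma hdet_base2 : Hdet 0 2 = -3 := by
  have h := hdet_succ 0 0
  rw [hdet_one, hdet_one] at h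
  simp only [show (0:ℕ)+2 = 2 from rfl, show (0:ℕ)+1 = 1 from rfl, show (1:ℕ)+1 = 2 from rfl] at h
  rw [h, aseq_one, aseq_two]
  ring
lemma hdet_base3 : Hdet 0 3 = 6 := by
  have h := hdet_succ 0 1
  have h2 := hdet_succ 1 0
  rw [hdet_one] at h2
  simp only [show (0:ℕ)+2 = 2 from rfl, show (0:ℕ)+1 = 1 from rfl, show (1:ℕ)+1 = 2 from rfl,
    show (2:ℕ)+1 = 3 from rfl, show (1:ℕ)+2 = 3 from rfl] at h h2
  rw [h, h2, hdet_base2, hdet_one]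
  simp only [show (2:ℕ)+1 = 3 from rfl]
  rw [aseq_one, aseq_two, aseq_three]
  ring

def Sfun (n : ℕ) : ℚ :=
  ∑ i ∈ Finset.range n, (2 : ℚ) ^ (-(i : ℤ) - ((i / 2 : ℕ) : ℤ)) * ((n - 1 - i).choose (i / 2) : ℚ)

def Q (n : ℕ) : ℚ := (-2 : ℚ) ^ (n - 1) * Sfun n

lemma pow_shift (i : ℕ) :
    (2 : ℚ) ^ (-((i+2 : ℕ) : ℤ) - (((i+2) / 2 : ℕ) : ℤ)) =
      (2 : ℚ) ^ (-(i : ℤ) - ((i / 2 : ℕ) : ℤ)) / 8 := by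
  rw [show (i+2)/2 = i/2 + 1 from Nat.add_div_right i (by norm_num)]
  rw [show (-((i+2 : ℕ) : ℤ) - ((i / 2 + 1 : ℕ) : ℤ)) = (-(i : ℤ) - ((i / 2 : ℕ) : ℤ)) + (-3) by
    push_cast; ring]
  rw [zpow_add₀ (by norm_num : (2:ℚ) ≠ 0)]
  norm_num
  ring

lemma sum_shift_aux (m : ℕ) (f g h : ℕ → ℚ)
    (h2 : ∀ i, i < m → f (i+1+1) = g (i+1+1) + h i / 8)
    (h0 : f 0 = g 0) (h1 : f (0+1) = g (0+1)) :
    ∑ i ∈ Finset.range (m+2), f i = ∑ i ∈ Finset.range (m+2), g i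
      + (∑ i ∈ Finset.range m, h i) / 8 := by
  rw [Finset.sum_range_succ', Finset.sum_range_succ']
  rw [Finset.sum_range_succ' g, Finset.sum_range_succ' (fun i => g (i+1))]
  have e : ∑ i ∈ Finset.range m, f (i+1+1)
      = ∑ i ∈ Finset.range m, (g (i+1+1) + h i / 8) := by
    apply Finset.sum_congr rfl
    intro i hi
    exact h2 i (Finset.mem_range.mp hi)
  rw [e, Finset.sum_add_distrib, ← Finset.sum_div, h0, h1]
  ring

lemma S_rec (m : ℕ) : Sfun (m + 3) = Sfun (m + 2) + Sfun m / 8 := by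
  unfold Sfun
  rw [Finset.sum_range_succ]
  rw [show m+3-1-(m+2) = 0 from by omega]
  rw [Nat.choose_eq_zero_of_lt (by omega : 0 < (m+2)/2)]
  rw [Nat.cast_zero, mul_zero, add_zero]
  apply sum_shift_aux m
  · intro i hi
    simp only [show i+1+1 = i+2 from rfl]
    rw [pow_shift, show m+3-1-(i+2) = (m-1-i)+1 from by omega,
      show m+2-1-(i+2) = m-1-i from by omega,
      show (i+2)/2 = i/2 + 1 from Nat.add_div_right i (by norm_num),
      Nat.choose_succ_succ]
    push_cast
    ring
  · norm_num
  · norm_num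

lemma Q_one : Q 1 = 1 := by
  norm_num [Q, Sfun]

lemma Q_two : Q 2 = -3 := by
  norm_num [Q, Sfun, Finset.sum_range_succ]

lemma Q_three : Q 3 = 6 := by
  norm_num [Q, Sfun, Finset.sum_range_succ]

lemma Q_rec (t : ℕ) : Q (t+4) = -2 * Q (t+3) - Q (t+1) := by
  unfold Q
  rw [show t+4-1 = t+3 from by omega, show t+3-1 = t+2 from by omega,
    show t+1-1 = t from by omega]
  have h := S_rec (t+1)
  rw [show t+1+3 = t+4 from by omega, show t+1+2 = t+3 from by omega] at h
  rw [h]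
  ring

lemma main : ∀ n, 1 ≤ n → ((Hdet 0 n : ℤ) : ℚ) = Q n := by
  intro n
  induction n using Nat.strong_induction_on with
  | _ n ih =>
    match n, ih with
    | 0, _ => intro h; exact absurd h (by norm_num)
    | 1, _ => intro _; rw [hdet_base1, Q_one]; norm_num
    | 2, _ => intro _; rw [hdet_base2, Q_two]; norm_num
    | 3, _ => intro _; rw [hdet_base3, Q_three]; norm_num
    | (t+4), ih =>
      intro _
      have h1 := ih (t+3) (by omega) (by omega)
      have h2 := ih (t+1) (by omega) (by omega)
      rw [hdet_main_rec t, Q_rec t]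
      push_cast
      rw [h1, h2]

lemma thdet_eq (n : ℕ) : THdet aseq n = Hdet 0 n := by
  unfold THdet Hdet Hmat
  congr 1
  funext p q
  simp only [Matrix.of_apply]
  by_cases h : (q:ℕ) = 0
  · rw [if_pos h, if_pos (by omega : (q:ℕ) ≤ (p:ℕ)+1), h]
    norm_num
  · rw [if_neg h]

theorem stmt_8 (n : ℕ) (hn : 1 ≤ n) :
    ((THdet (fun k => if k = 0 then 1 else trib (2 * k + 1)) n : ℤ) : ℚ) =
      (-2 : ℚ) ^ (n - 1) *
        ∑ i ∈ Finset.range n,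
          (2 : ℚ) ^ (-(i : ℤ) - ((i / 2 : ℕ) : ℤ)) * ((n - 1 - i).choose (i / 2) : ℚ) := by
  have h := main n hn
  show ((THdet aseq n : ℤ) : ℚ) = _
  rw [thdet_eq n, h]
  unfold Q Sfun
  rfl
end

section
/- Fix an odd integer r ≥ 3 and let {S_n^{(r)}} be defined by S_n^{(r)} = S_{n−1}^{(r)} + S_{n−(r+1)/2}^{(r)} + S_{n−r}^{(r)} for n ≥ r, with S_0^{(r)} = ⋯ = S_{r−2}^{(r)} = 0 and S_{r−1}^{(r)} = 1. For every integer n ≥ (r+1)/2, the Toeplitz–Hessenberg determinant det(−1; S_{(r−1)/2}^{(r)}, S_{(r+1)/2}^{(r)}, …, S_{n+(r−3)/2}^{(r)}) equals Σ_{i=0}^{⌊(2n−r−1)/r⌋} C(2n−r−1−(r−1)i, i). -/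
open Finset Matrix PowerSeries

lemma PowerSeries.coeff_mul_X' {R : Type*} [CommRing R] (p : R⟦X⟧) (n : ℕ) :
    coeff n (p * X) = if 1 ≤ n then coeff (n - 1) p else 0 := by
  simpa using coeff_mul_X_pow' p 1 n

section ToeplitzHessenberg

variable {R : Type*} [CommRing R] (a : ℕ → R)

def toeplitzHessenberg (n : ℕ) : Matrix (Fin n) (Fin n) R :=
  Matrix.of fun i j => if (j : ℕ) ≤ i + 1 then a (i + 1 - j) else 0

def invertTransform : ℕ → R
  | 0 => 1
  | n + 1 => ∑ k : Fin (n + 1), a (n + 1 - k) * invertTransform k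

lemma invertTransform_succ (n : ℕ) :
    invertTransform a (n + 1) = ∑ k ∈ range (n + 1), a (n + 1 - k) * invertTransform a k := by
  rw [invertTransform, Fin.sum_univ_eq_sum_range (fun k => a (n + 1 - k) * invertTransform a k)]

theorem mk_invertTransform_mul :
    PowerSeries.mk (invertTransform a) * (1 - X * PowerSeries.mk fun k => a (k + 1)) = 1 := by
  ext (_ | n)
  · simp [invertTransform]
  · rw [mul_sub, mul_one, mul_left_comm, map_sub, coeff_succ_X_mul, coeff_mul,
      Nat.sum_antidiagonal_eq_sum_range_succ_mk, coeff_mk, invertTransform_succ, coeff_one,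
      if_neg n.succ_ne_zero, sub_eq_zero]
    refine sum_congr rfl fun k hk => ?_
    rw [coeff_mk, coeff_mk, mul_comm, Nat.sub_add_comm (mem_range_succ_iff.mp hk)]

variable {a}

lemma toeplitzHessenberg_mulVec_invertTransform (ha : a 0 = -1) (n : ℕ) :
    toeplitzHessenberg a (n + 1) *ᵥ (fun j => invertTransform a j) =
      Pi.single (Fin.last n) (invertTransform a (n + 1)) := by
  ext i
  simp only [mulVec, dotProduct, toeplitzHessenberg, of_apply, ite_mul, zero_mul]
  rw [Fin.sum_univ_eq_sum_range (fun j => if j ≤ i + 1 then a (i + 1 - j) * invertTransform a j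
    else 0), ← sum_filter]
  rcases (Fin.le_last i).lt_or_eq with hi | rfl
  · -- `a 0 = -1` cancels the recursion for `invertTransform a (i + 1)`
    have hrange : {j ∈ range (n + 1) | j ≤ (i : ℕ) + 1} = range (i + 2) := by
      ext j; simp only [mem_filter, mem_range]; omega
    rw [Pi.single_eq_of_ne hi.ne, hrange, sum_range_succ, ← invertTransform_succ, Nat.sub_self,
      ha]
    ring
  · have hrange : {j ∈ range (n + 1) | j ≤ n + 1} = range (n + 1) := by
      ext j; simp only [mem_filter, mem_range]; omega
    simp only [Fin.val_last, Pi.single_eq_same, hrange, invertTransform_succ]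

lemma det_toeplitzHessenberg_updateCol_zero_single_last (ha : a 0 = -1) (n : ℕ) :
    ((toeplitzHessenberg a (n + 1)).updateCol 0 (Pi.single (Fin.last n) 1)).det = 1 := by
  have hminor :
      ((toeplitzHessenberg a (n + 1)).submatrix Fin.castSucc Fin.succ).det = (-1) ^ n := by
    rw [det_of_isLowerTriangular]
    · simp [toeplitzHessenberg, ha]
    · intro i j hij
      simp only [submatrix_apply, toeplitzHessenberg, of_apply, Fin.val_succ, Fin.val_castSucc]
      rw [if_neg (by have : (i : ℕ) < j := hij; omega)]
  rw [det_succ_column_zero, Fin.sum_univ_succAbove _ (Fin.last n)]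
  simp only [updateCol_self, Pi.single_eq_same, Fin.succAbove_last,
    Pi.single_eq_of_ne (Fin.castSucc_lt_last _).ne, mul_zero, zero_mul, sum_const_zero, add_zero]
  rw [← Fin.succAbove_zero, submatrix_updateCol_succAbove, Fin.succAbove_zero, hminor,
    Fin.val_last, mul_one, ← pow_add, ← two_mul, pow_mul, neg_one_sq, one_pow]

theorem det_toeplitzHessenberg (ha : a 0 = -1) (n : ℕ) :
    (toeplitzHessenberg a n).det = invertTransform a n := by
  cases n with
  | zero => simp [invertTransform]
  | succ n =>
    have h := congrFun (cramer_eq_adjugate_mulVec (toeplitzHessenberg a (n + 1))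
      (toeplitzHessenberg a (n + 1) *ᵥ fun j => invertTransform a j)) 0
    rw [mulVec_mulVec, adjugate_mul, smul_mulVec, one_mulVec,
      toeplitzHessenberg_mulVec_invertTransform ha, cramer_apply, ← mul_one (invertTransform a _),
      ← smul_eq_mul, Pi.single_smul', det_updateCol_smul,
      det_toeplitzHessenberg_updateCol_zero_single_last ha] at h
    simpa [invertTransform] using h.symm

end ToeplitzHessenberg

theorem THdet_eq_det_toeplitzHessenberg (a : ℕ → ℤ) (n : ℕ) :
    THdet a n = (toeplitzHessenberg a n).det :=
  rfl

theorem mk_shift_mul_eq_X_pow {R : Type*} [CommRing R] {m : ℕ} {S : ℕ → R}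
    (hS0 : ∀ k < 2 * m, S k = 0) (hS1 : S (2 * m) = 1)
    (hSrec : ∀ n, 2 * m + 1 ≤ n → S n = S (n - 1) + S (n - (m + 1)) + S (n - (2 * m + 1))) :
    PowerSeries.mk (fun k => S (k + m)) * (1 - X - X ^ (m + 1) - X ^ (2 * m + 1)) = X ^ m := by
  ext n
  simp only [mul_sub, mul_one, map_sub, coeff_mul_X', coeff_mul_X_pow', coeff_mk, coeff_X_pow]
  rcases le_or_gt n m with hn | hn
  · rw [if_neg (show ¬m + 1 ≤ n by omega), if_neg (show ¬2 * m + 1 ≤ n by omega), sub_zero,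
      sub_zero]
    rcases hn.lt_or_eq with hn | rfl
    · rw [if_neg hn.ne, hS0 _ (by omega), hS0 (n - 1 + m) (by omega), ite_self, sub_zero]
    · rw [if_pos rfl, ← two_mul, hS1]
      split_ifs
      · rw [hS0 _ (by omega), sub_zero]
      · rw [sub_zero]
  · rw [hSrec (n + m) (by omega), if_pos (show 1 ≤ n by omega),
      if_pos (show m + 1 ≤ n by omega), if_neg hn.ne', show n + m - 1 = n - 1 + m by omega,
      show n + m - (m + 1) = n - (m + 1) + m by omega]
    split_ifs
    · rw [show n + m - (2 * m + 1) = n - (2 * m + 1) + m by omega]; ring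
    · rw [hS0 (n + m - (2 * m + 1)) (by omega)]; ring

def diagChooseSum (r N : ℕ) : ℤ :=
  ∑ i ∈ range (N / r + 1), ((N - (r - 1) * i).choose i : ℤ)

lemma diagChooseSum_of_lt {r N : ℕ} (h : N < r) : diagChooseSum r N = 1 := by
  simp [diagChooseSum, Nat.div_eq_of_lt h]

lemma sum_range_choose_eq_diagChooseSum {r N b : ℕ} (hr : 0 < r) (h : N / r ≤ b) :
    ∑ i ∈ range (b + 1), ((N - (r - 1) * i).choose i : ℤ) = diagChooseSum r N := by
  refine (sum_subset (range_subset_range.mpr (by omega)) fun i _ hi => ?_).symm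
  rw [mem_range, not_lt] at hi
  have hlt : N < i * r := (Nat.div_lt_iff_lt_mul hr).mp hi
  have hi0 : 0 < i := (N / r).succ_pos.trans_le hi
  have : i * r = (r - 1) * i + i := by
    obtain ⟨r, rfl⟩ := Nat.exists_eq_add_of_lt hr
    simp only [zero_add, Nat.add_sub_cancel]; ring
  simp [Nat.choose_eq_zero_of_lt (show N - (r - 1) * i < i by omega)]

lemma choose_sub_mul_succ {r N i : ℕ} (hr : 0 < r) (h : (i + 1) * r ≤ N) :
    (N - (r - 1) * (i + 1)).choose (i + 1) =
      (N - 1 - (r - 1) * (i + 1)).choose (i + 1) + (N - r - (r - 1) * i).choose i := by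
  have : (i + 1) * r = (r - 1) * (i + 1) + (i + 1) := by
    obtain ⟨r, rfl⟩ := Nat.exists_eq_add_of_lt hr
    simp only [zero_add, Nat.add_sub_cancel]; ring
  rw [show N - (r - 1) * (i + 1) = N - 1 - (r - 1) * (i + 1) + 1 by omega, Nat.choose_succ_succ',
    show N - 1 - (r - 1) * (i + 1) = N - r - (r - 1) * i by rw [mul_add]; omega, add_comm]

lemma diagChooseSum_eq_add {r N : ℕ} (hr : 0 < r) (h : r ≤ N) :
    diagChooseSum r N = diagChooseSum r (N - 1) + diagChooseSum r (N - r) := by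
  have hpascal : ∀ i ∈ range (N / r), ((N - (r - 1) * (i + 1)).choose (i + 1) : ℤ) =
      (N - 1 - (r - 1) * (i + 1)).choose (i + 1) + (N - r - (r - 1) * i).choose i := fun i hi => by
    rw [choose_sub_mul_succ hr ((Nat.le_div_iff_mul_le hr).mp (mem_range.mp hi)), Nat.cast_add]
  rw [diagChooseSum, sum_range_succ', sum_congr rfl hpascal, sum_add_distrib,
    ← sum_range_choose_eq_diagChooseSum hr (Nat.div_le_div_right (Nat.sub_le N 1)),
    sum_range_succ' _ (N / r), diagChooseSum, ← Nat.div_eq_sub_div hr h]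
  simp only [mul_zero, Nat.sub_zero, Nat.choose_zero_right]
  ring

theorem mk_diagChooseSum_mul {r : ℕ} (hr : 0 < r) :
    PowerSeries.mk (diagChooseSum r) * (1 - X - X ^ r) = 1 := by
  ext N
  simp only [mul_sub, mul_one, map_sub, coeff_mul_X', coeff_mul_X_pow', coeff_mk, coeff_one]
  rcases lt_or_ge N r with h | h
  · rw [if_neg (not_le.mpr h), diagChooseSum_of_lt h, sub_zero]
    rcases N with _ | N
    · simp
    · rw [if_pos (Nat.le_add_left 1 N), Nat.add_sub_cancel, diagChooseSum_of_lt (by omega),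
        if_neg N.succ_ne_zero, sub_self]
  · rw [diagChooseSum_eq_add hr h, if_pos (by omega), if_pos h, if_neg (by omega)]
    ring

lemma coeff_two_mul_mul_X_pow_two_mul {R : Type*} [CommRing R] (f : ℕ → R) (p k : ℕ) :
    coeff (2 * p) (PowerSeries.mk f * X ^ (2 * k)) =
      coeff p (PowerSeries.mk (fun j => f (2 * j)) * X ^ k) := by
  simp only [coeff_mul_X_pow', coeff_mk, Nat.mul_le_mul_left_iff two_pos, ← Nat.mul_sub]

theorem mk_diagChooseSum_two_mul_mul (m : ℕ) :
    PowerSeries.mk (fun p => diagChooseSum (2 * m + 1) (2 * p)) *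
      (1 - X - 2 * X ^ (m + 1) - X ^ (2 * m + 1)) = 1 := by
  have h : PowerSeries.mk (diagChooseSum (2 * m + 1)) *
      (1 - X ^ (2 * 1) - 2 * X ^ (2 * (m + 1)) - X ^ (2 * (2 * m + 1))) =
        1 + X + X ^ (2 * m + 1) := by
    linear_combination (1 + X + X ^ (2 * m + 1)) * mk_diagChooseSum_mul (r := 2 * m + 1) (by omega)
  ext p
  have hp := congrArg (coeff (2 * p)) h
  rw [← map_ofNat (C (R := ℤ)) 2] at hp ⊢
  simp only [mul_sub, mul_one (M := ℤ⟦X⟧), map_sub, mul_left_comm _ (C _), coeff_C_mul,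
    coeff_two_mul_mul_X_pow_two_mul, pow_one, coeff_mk] at hp ⊢
  rw [hp]
  simp only [map_add, coeff_one, coeff_X, coeff_X_pow]
  split_ifs <;> omega

theorem invertTransform_eq_diagChooseSum {m : ℕ} {S a : ℕ → ℤ}
    (hS0 : ∀ k < 2 * m, S k = 0) (hS1 : S (2 * m) = 1)
    (hSrec : ∀ n, 2 * m + 1 ≤ n → S n = S (n - 1) + S (n - (m + 1)) + S (n - (2 * m + 1)))
    (ha : ∀ k, a (k + 1) = S (k + m)) {n : ℕ} (hn : m + 1 ≤ n) :
    invertTransform a n = diagChooseSum (2 * m + 1) (2 * (n - (m + 1))) := by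
  have hD := mk_invertTransform_mul a
  simp only [ha] at hD
  set D := PowerSeries.mk (invertTransform a)
  set E := PowerSeries.mk fun p => diagChooseSum (2 * m + 1) (2 * p)
  have hDP : D * (1 - X - 2 * X ^ (m + 1) - X ^ (2 * m + 1)) =
      1 - X - X ^ (m + 1) - X ^ (2 * m + 1) := by
    linear_combination (1 - X - X ^ (m + 1) - X ^ (2 * m + 1)) * hD +
      D * X * mk_shift_mul_eq_X_pow hS0 hS1 hSrec
  have hgf : D = 1 + X ^ (m + 1) * E := by
    linear_combination (1 - D) * mk_diagChooseSum_two_mul_mul m + E * hDP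
  have := congrArg (coeff n) hgf
  rwa [coeff_mk, map_add, coeff_one, if_neg (by omega), zero_add, coeff_X_pow_mul', if_pos hn,
    coeff_mk] at this

theorem stmt_18_general (r : ℕ) (hodd : Odd r) (S : ℕ → ℤ)
    (hS0 : ∀ k, k < r - 1 → S k = 0) (hS1 : S (r - 1) = 1)
    (hSrec : ∀ n, r ≤ n → S n = S (n - 1) + S (n - (r + 1) / 2) + S (n - r))
    (n : ℕ) (hn : (r + 1) / 2 ≤ n) :
    THdet (fun k => if k = 0 then -1 else S (k - 1 + (r - 1) / 2)) n =
      ∑ i ∈ Finset.range ((2 * n - r - 1) / r + 1),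
        ((2 * n - r - 1 - (r - 1) * i).choose i : ℤ) := by
  obtain ⟨m, rfl⟩ := hodd
  have hm : (2 * m + 1 + 1) / 2 = m + 1 := by omega
  rw [hm] at hn hSrec
  rw [show (2 * m + 1 - 1) / 2 = m by omega, THdet_eq_det_toeplitzHessenberg,
    det_toeplitzHessenberg (by simp) n,
    invertTransform_eq_diagChooseSum (fun k hk => hS0 k (by omega)) (by simpa using hS1) hSrec
      (by simp) hn, diagChooseSum, show 2 * (n - (m + 1)) = 2 * n - (2 * m + 1) - 1 by omega]

theorem stmt_18 (r : ℕ) (hr : 3 ≤ r) (hodd : Odd r) (S : ℕ → ℤ)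
    (hS0 : ∀ k, k < r - 1 → S k = 0) (hS1 : S (r - 1) = 1)
    (hSrec : ∀ n, r ≤ n → S n = S (n - 1) + S (n - (r + 1) / 2) + S (n - r))
    (n : ℕ) (hn : (r + 1) / 2 ≤ n) :
    THdet (fun k => if k = 0 then -1 else S (k - 1 + (r - 1) / 2)) n =
      ∑ i ∈ Finset.range ((2 * n - r - 1) / r + 1),
        ((2 * n - r - 1 - (r - 1) * i).choose i : ℤ) :=
  stmt_18_general r hodd S hS0 hS1 hSrec n hn
end
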